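/- In a finite Dung argumentation framework (A, R), a set S ⊆ A is a complete extension if and only if there exists a complete labelling λ : A → {+,-,?} such that S = {a ∈ A | λ(a) = +}. -/

import Mathlib

inductive Lab : Type
  | plus | minus | quest
deriving DecidableEq

section
variable {A : Type*} (R : A → A → Prop)

def ConflictFree (S : Set A) : Prop := ∀ a ∈ S, ∀ b ∈ S, ¬ R a b

def Defends (S : Set A) (a : A) : Prop := ∀ b, R b a → ∃ c ∈ S, R c b

/-- S is a complete extension iff it is conflict-free and contains
exactly the arguments it defends. -/
def CompleteExt (S : Set A) : Prop :=
  ConflictFree R S ∧ ∀ a, a ∈ S ↔ Defends R S a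

def CompleteLab (lab : A → Lab) : Prop :=
  ∀ a, (lab a = Lab.plus ↔ ∀ b, R b a → lab b = Lab.minus) ∧
       (lab a = Lab.minus ↔ ∃ b, R b a ∧ lab b = Lab.plus)

end

/-! A complete extension `S` yields the labelling that is `+` on `S`, `-` on the arguments
attacked by `S` and `?` elsewhere; conflict-freeness keeps the first two cases disjoint.
Conversely, the `+`-set of a complete labelling is conflict-free because `+` arguments have only
`-` attackers, and it contains exactly what it defends because an argument is `-` exactly when
some `+` argument attacks it. -/

section
variable {A : Type*} {R : A → A → Prop}

theorem ConflictFree.notMem_of_attacked {S : Set A} (hS : ConflictFree R S) {a b : A}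
    (hb : b ∈ S) (hba : R b a) : a ∉ S :=
  fun ha => hS b hb a ha hba

variable (R) in
open Classical in
noncomputable def labOfSet (S : Set A) (a : A) : Lab :=
  if a ∈ S then .plus else if ∃ b ∈ S, R b a then .minus else .quest

theorem labOfSet_eq_plus_iff {S : Set A} {a : A} : labOfSet R S a = .plus ↔ a ∈ S := by
  unfold labOfSet
  split_ifs <;> simp_all

theorem ConflictFree.labOfSet_eq_minus_iff {S : Set A} (hS : ConflictFree R S) {a : A} :
    labOfSet R S a = .minus ↔ ∃ b ∈ S, R b a := by
  unfold labOfSet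
  split_ifs with ha hattacked
  · simp only [false_iff]
    exact fun ⟨b, hb, hba⟩ => hS.notMem_of_attacked hb hba ha
  · simpa using hattacked
  · simpa using hattacked

theorem CompleteExt.completeLab_labOfSet {S : Set A} (hS : CompleteExt R S) :
    CompleteLab R (labOfSet R S) := by
  obtain ⟨hcf, hdef⟩ := hS
  intro a
  rw [labOfSet_eq_plus_iff, hcf.labOfSet_eq_minus_iff, hdef a]
  exact ⟨forall₂_congr fun b _ => by rw [hcf.labOfSet_eq_minus_iff],
    exists_congr fun b => by rw [labOfSet_eq_plus_iff, and_comm]⟩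

theorem CompleteLab.conflictFree {lab : A → Lab} (hlab : CompleteLab R lab) :
    ConflictFree R {a | lab a = .plus} := by
  intro a ha b hb hab
  have hminus : lab a = .minus := (hlab b).1.1 hb a hab
  exact Lab.noConfusion (ha.symm.trans hminus)

theorem CompleteLab.completeExt {lab : A → Lab} (hlab : CompleteLab R lab) :
    CompleteExt R {a | lab a = .plus} := by
  refine ⟨hlab.conflictFree, fun a => (hlab a).1.trans ?_⟩
  refine forall₂_congr fun b _ => (hlab b).2.trans ?_
  exact exists_congr fun c => and_comm

end

theorem complete_ext_iff_labelling_general {A : Type*} (R : A → A → Prop)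
    (S : Set A) :
    CompleteExt R S ↔ ∃ lab : A → Lab, CompleteLab R lab ∧ S = {a | lab a = Lab.plus} := by
  constructor
  · intro hS
    exact ⟨labOfSet R S, hS.completeLab_labOfSet, by ext; exact labOfSet_eq_plus_iff.symm⟩
  · rintro ⟨lab, hlab, rfl⟩
    exact hlab.completeExt

theorem complete_ext_iff_labelling {A : Type*} [Fintype A] (R : A → A → Prop)
    (S : Set A) :
    CompleteExt R S ↔ ∃ lab : A → Lab, CompleteLab R lab ∧ S = {a | lab a = Lab.plus} :=
  complete_ext_iff_labelling_general R S
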